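/- arXiv:0908.3625 — 3 statements merged into one kernel-verified Lean document; each statement's English description precedes it below -/
import Mathlib

section
/- Let B be a constant real symmetric 3×3 matrix with trace 0, and let A : ℝ → M₃(ℝ) be a differentiable family of real symmetric 3×3 matrices with trace 0 such that A(t)B = B A(t) for every t. Then the fields v(t,(x,y,z)) = A(t)(x,y,z)ᵀ and H(t,(x,y,z)) = B(x,y,z)ᵀ, together with the pressure p(t,(x,y,z)) = −(ρ/2)⟨(x,y,z), (A′(t)+A(t)²)(x,y,z)⟩, solve the MHD equations on ℝ × ℝ³. (This is Proposition 2.1; for symmetric traceless A, B the commutation condition is exactly the paper's linear system (2.10) on the entries of A.) -/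
open Real Matrix

/-!
All fields are linear in `x`, so second spatial derivatives vanish: the viscous and resistive
terms drop out, and `∇·v = tr A`, `∇·H = tr B`. As `B` is symmetric, `H` is a gradient, so
`∇×H = 0` and the Lorentz force vanishes. By `∇×(u×w) = u ∇·w − w ∇·u + (w·∇)u − (u·∇)w`, the
induction equation reduces to `(AB − BA)x = 0`. Finally `∂ₜv + (v·∇)v = (A′ + A²)x`, which is
`−(1/ρ)∇p` because `A′ + A²` is symmetric.
-/

/-- Partial derivative in the `i`-th spatial coordinate. -/
noncomputable def pd (i : Fin 3) (f : (Fin 3 → ℝ) → ℝ) (x : Fin 3 → ℝ) : ℝ :=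
  deriv (fun s => f (Function.update x i s)) (x i)

/-- Divergence of a vector field on `ℝ³`. -/
noncomputable def vdiv (F : (Fin 3 → ℝ) → (Fin 3 → ℝ)) (x : Fin 3 → ℝ) : ℝ :=
  ∑ i, pd i (fun y => F y i) x

/-- Curl of a vector field on `ℝ³`. -/
noncomputable def vcurl (F : (Fin 3 → ℝ) → (Fin 3 → ℝ)) (x : Fin 3 → ℝ) : Fin 3 → ℝ :=
  ![pd 1 (fun y => F y 2) x - pd 2 (fun y => F y 1) x,
    pd 2 (fun y => F y 0) x - pd 0 (fun y => F y 2) x,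
    pd 0 (fun y => F y 1) x - pd 1 (fun y => F y 0) x]

/-- Laplacian of a scalar field on `ℝ³`. -/
noncomputable def slap (f : (Fin 3 → ℝ) → ℝ) (x : Fin 3 → ℝ) : ℝ :=
  ∑ i, pd i (fun y => pd i f y) x

/-- Cross product on `ℝ³`. -/
def cross3 (u v : Fin 3 → ℝ) : Fin 3 → ℝ :=
  ![u 1 * v 2 - u 2 * v 1, u 2 * v 0 - u 0 * v 2, u 0 * v 1 - u 1 * v 0]

/-- The incompressible viscous MHD equations with finite electrical conductivity:
(M1) `∇·v = 0`, (M2) momentum, (M3) `∇·H = 0`, (M4) induction. -/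
def MHD (ρ ν μ₀ η : ℝ) (v H : ℝ → (Fin 3 → ℝ) → (Fin 3 → ℝ))
    (p : ℝ → (Fin 3 → ℝ) → ℝ) : Prop :=
  ∀ (t : ℝ) (x : Fin 3 → ℝ),
    vdiv (v t) x = 0 ∧
    (∀ i, deriv (fun s => v s x i) t
        + (∑ j, v t x j * pd j (fun y => v t y i) x)
        - μ₀ * cross3 (H t x) (vcurl (H t) x) i
        + (1 / ρ) * pd i (p t) x
        = ν * slap (fun y => v t y i) x) ∧
    vdiv (H t) x = 0 ∧
    (∀ i, deriv (fun s => H s x i) t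
        = vcurl (fun y => cross3 (v t y) (H t y)) x i
          + η * slap (fun y => H t y i) x)

theorem cross3_zero_right (u : Fin 3 → ℝ) : cross3 u 0 = 0 := by
  ext k
  fin_cases k <;> simp [cross3]

section HasDerivAt

variable {m n : Type*} [Fintype n] {t : ℝ}

theorem hasDerivAt_dotProduct {u w : ℝ → n → ℝ} {u' w' : n → ℝ}
    (hu : ∀ k, HasDerivAt (fun s => u s k) (u' k) t)
    (hw : ∀ k, HasDerivAt (fun s => w s k) (w' k) t) :
    HasDerivAt (fun s => u s ⬝ᵥ w s) (u' ⬝ᵥ w t + u t ⬝ᵥ w') t := by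
  simp only [dotProduct, ← Finset.sum_add_distrib]
  exact HasDerivAt.fun_sum fun k _ => (hu k).mul (hw k)

theorem hasDerivAt_mulVec_apply {M : ℝ → Matrix m n ℝ} {M' : Matrix m n ℝ} {u : ℝ → n → ℝ}
    {u' : n → ℝ} (hM : ∀ i j, HasDerivAt (fun s => M s i j) (M' i j) t)
    (hu : ∀ k, HasDerivAt (fun s => u s k) (u' k) t) (i : m) :
    HasDerivAt (fun s => (M s *ᵥ u s) i) ((M' *ᵥ u t + M t *ᵥ u') i) t :=
  hasDerivAt_dotProduct (hM i) hu

theorem hasDerivAt_cross3_apply {u w : ℝ → Fin 3 → ℝ} {u' w' : Fin 3 → ℝ}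
    (hu : ∀ k, HasDerivAt (fun s => u s k) (u' k) t)
    (hw : ∀ k, HasDerivAt (fun s => w s k) (w' k) t) (k : Fin 3) :
    HasDerivAt (fun s => cross3 (u s) (w s) k) (cross3 u' (w t) k + cross3 (u t) w' k) t := by
  fin_cases k
  · exact (((hu 1).mul (hw 2)).sub ((hu 2).mul (hw 1))).congr_deriv (by simp [cross3]; ring)
  · exact (((hu 2).mul (hw 0)).sub ((hu 0).mul (hw 2))).congr_deriv (by simp [cross3]; ring)
  · exact (((hu 0).mul (hw 1)).sub ((hu 1).mul (hw 0))).congr_deriv (by simp [cross3]; ring)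

theorem transpose_eq_of_hasDerivAt {A : ℝ → Matrix m m ℝ} {A' : Matrix m m ℝ}
    (hA : ∀ s, (A s)ᵀ = A s) (hA' : ∀ i j, HasDerivAt (fun s => A s i j) (A' i j) t) :
    A'ᵀ = A' := by
  ext i j
  have hji : (fun s => A s j i) = fun s => A s i j := funext fun s => by
    rw [← Matrix.transpose_apply (A s) i j, hA]
  exact (hA' j i).unique (hji ▸ hA' i j)

end HasDerivAt

section PartialDerivatives

variable (M N : Matrix (Fin 3) (Fin 3) ℝ) (x : Fin 3 → ℝ) (i : Fin 3)

theorem pd_const_mul (c : ℝ) (f : (Fin 3 → ℝ) → ℝ) : pd i (fun y => c * f y) x = c * pd i f x :=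
  congrFun (deriv_const_mul_field' c) (x i)

theorem hasDerivAt_update_apply (k : Fin 3) :
    HasDerivAt (fun s => Function.update x i s k) ((Pi.single i (1 : ℝ) : Fin 3 → ℝ) k) (x i) :=
  hasDerivAt_pi.1 (hasDerivAt_update x i (x i)) k

theorem hasDerivAt_mulVec_update_apply (j : Fin 3) :
    HasDerivAt (fun s => (M *ᵥ Function.update x i s) j) (M j i) (x i) := by
  simpa using hasDerivAt_mulVec_apply (M := fun _ => M) (M' := 0) (fun _ _ => hasDerivAt_const _ _)
    (hasDerivAt_update_apply x i) j

theorem pd_mulVec (j : Fin 3) : pd i (fun y => (M *ᵥ y) j) x = M j i :=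
  (hasDerivAt_mulVec_update_apply M x i j).deriv

theorem pd_cross3_mulVec (k : Fin 3) :
    pd i (fun y => cross3 (M *ᵥ y) (N *ᵥ y) k) x
      = cross3 (M.col i) (N *ᵥ x) k + cross3 (M *ᵥ x) (N.col i) k := by
  have h := (hasDerivAt_cross3_apply (hasDerivAt_mulVec_update_apply M x i)
    (hasDerivAt_mulVec_update_apply N x i) k).deriv
  rw [Function.update_eq_self] at h
  exact h

theorem pd_dotProduct_mulVec :
    pd i (fun y => y ⬝ᵥ M *ᵥ y) x = ((M + Mᵀ) *ᵥ x) i := by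
  have h := hasDerivAt_dotProduct (hasDerivAt_update_apply x i)
    (hasDerivAt_mulVec_update_apply M x i)
  rw [Function.update_eq_self] at h
  refine h.deriv.trans ?_
  rw [single_one_dotProduct, Matrix.add_mulVec, Pi.add_apply, dotProduct_comm]
  rfl

end PartialDerivatives

section VectorCalculus

variable (M N : Matrix (Fin 3) (Fin 3) ℝ) (x : Fin 3 → ℝ)

theorem vdiv_mulVec : vdiv (M *ᵥ ·) x = M.trace := by
  simp [vdiv, pd_mulVec, Matrix.trace]

theorem slap_mulVec (i : Fin 3) : slap (fun y => (M *ᵥ y) i) x = 0 := by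
  simp only [slap, pd_mulVec]
  simp [pd]

theorem vcurl_mulVec_of_transpose_eq (hM : Mᵀ = M) : vcurl (M *ᵥ ·) x = 0 := by
  have h : ∀ i j, M i j = M j i := fun i j => by rw [← Matrix.transpose_apply M j i, hM]
  ext k
  fin_cases k <;> simp [vcurl, pd_mulVec, h 1 2, h 0 2, h 0 1]

theorem vcurl_cross3_mulVec :
    vcurl (fun y => cross3 (M *ᵥ y) (N *ᵥ y)) x
      = N.trace • (M *ᵥ x) - M.trace • (N *ᵥ x) + (M * N - N * M) *ᵥ x := by
  simp only [vcurl, pd_cross3_mulVec]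
  ext k
  fin_cases k <;>
  · simp [cross3, Matrix.trace, Matrix.mulVec, dotProduct,
      Matrix.mul_apply, Fin.sum_univ_three]
    ring

theorem sum_mulVec_mul_pd_mulVec (i : Fin 3) :
    ∑ j, (M *ᵥ x) j * pd j (fun y => (M *ᵥ y) i) x = ((M * M) *ᵥ x) i := by
  simp only [pd_mulVec, ← Matrix.mulVec_mulVec]
  simp [Matrix.mulVec, dotProduct, mul_comm]

end VectorCalculus

/-- Proposition 2.1: linear solutions with `A(t)` symmetric traceless commuting with the
constant symmetric traceless matrix `B`. -/
theorem stmt_0 (ρ ν μ₀ η : ℝ) (hρ : 0 < ρ)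
    (B : Matrix (Fin 3) (Fin 3) ℝ) (hBsymm : Bᵀ = B) (hBtr : B.trace = 0)
    (A A' : ℝ → Matrix (Fin 3) (Fin 3) ℝ)
    (hAsymm : ∀ t, (A t)ᵀ = A t) (hAtr : ∀ t, (A t).trace = 0)
    (hcomm : ∀ t, A t * B = B * A t)
    (hA : ∀ i j t, HasDerivAt (fun s => A s i j) (A' t i j) t) :
    MHD ρ ν μ₀ η (fun t x => (A t).mulVec x) (fun _ x => B.mulVec x)
      (fun t x => -(ρ / 2) * (x ⬝ᵥ (A' t + A t * A t).mulVec x)) := by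
  intro t x
  have hv_t (i : Fin 3) : deriv (fun s => (A s *ᵥ x) i) t = (A' t *ᵥ x) i := by
    simpa using (hasDerivAt_mulVec_apply (u' := 0) (fun i j => hA i j t)
      (fun k => hasDerivAt_const t (x k)) i).deriv
  have hp_symm : (A' t + A t * A t)ᵀ = A' t + A t * A t := by
    rw [Matrix.transpose_add, Matrix.transpose_mul, hAsymm,
      transpose_eq_of_hasDerivAt hAsymm (fun i j => hA i j t)]
  refine ⟨by rw [vdiv_mulVec, hAtr], fun i => ?_, by rw [vdiv_mulVec, hBtr], fun i => ?_⟩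
  · rw [hv_t, sum_mulVec_mul_pd_mulVec, vcurl_mulVec_of_transpose_eq B x hBsymm,
      cross3_zero_right, pd_const_mul, pd_dotProduct_mulVec, hp_symm, slap_mulVec]
    simp only [Matrix.add_mulVec, Pi.add_apply, Pi.zero_apply]
    field_simp
    ring
  · rw [vcurl_cross3_mulVec, hAtr, hBtr, hcomm, sub_self, slap_mulVec]
    simp
end

section
/- Let h, β : ℝ → ℝ be differentiable and a, b, c, s ∈ ℝ. Fix an antiderivative P of β − a h and set q(t) = e^{2P(t)} ( (2a−b) s ∫₀ᵗ e^{−2P(τ)} dτ + c ), so that q′ = 2(β − ah)q + (2a−b)s. Then the fields u = a s y z + (β − a h)x, v = −β y, w = a h z, H¹ = a q(t) y z + (b/2 − a)x, H² = −(b/2) y, H³ = a z, together with the pressure p = −ρ[ (β′ − a h′ + (β − a h)²) x²/2 + (β² − β′) y²/2 + (a/2)(h′ + a h²) z² − μ₀ a² q² y² z² / 2 − μ₀ a q (b/2 − a) x y z ], solve the MHD equations on ℝ × ℝ³. (Theorem 3.1.) -/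
open Real Matrix

/-! Every field is polynomial in the space variables, so once the partial derivatives are
expanded by the product rule, each equation becomes a polynomial identity in `x` with coefficients
depending on `t`. The pressure is chosen to absorb the gradient part of the momentum equation. The
only non-algebraic input is the linear ODE `q' = 2 (β - a h) q + (2a - b) s`, solved by variation
of constants, which balances the `x₁ x₂` coefficient of the first component of the induction
equation. -/

section PartialDerivative

variable {f g : (Fin 3 → ℝ) → ℝ} {x : Fin 3 → ℝ} (i : Fin 3)

theorem HasFDerivAt.pd_eq {f' : (Fin 3 → ℝ) →L[ℝ] ℝ} (hf : HasFDerivAt f f' x) :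
    pd i f x = f' (Pi.single i 1) := by
  have hline := (Function.update_eq_self i x).symm ▸ hf
  exact (hline.comp_hasDerivAt (x i) (hasDerivAt_update x i (x i))).deriv

theorem pd_const (c : ℝ) : pd i (fun _ => c) x = 0 :=
  (hasFDerivAt_const c x).pd_eq i

theorem pd_apply (j : Fin 3) : pd i (fun y => y j) x = if i = j then 1 else 0 := by
  rw [(hasFDerivAt_apply j x).pd_eq i, ContinuousLinearMap.proj_apply, Pi.single_apply]
  simp [eq_comm]

theorem pd_add (hf : DifferentiableAt ℝ f x) (hg : DifferentiableAt ℝ g x) :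
    pd i (fun y => f y + g y) x = pd i f x + pd i g x := by
  rw [(hf.hasFDerivAt.fun_add hg.hasFDerivAt).pd_eq i, hf.hasFDerivAt.pd_eq i,
    hg.hasFDerivAt.pd_eq i]
  rfl

theorem pd_sub (hf : DifferentiableAt ℝ f x) (hg : DifferentiableAt ℝ g x) :
    pd i (fun y => f y - g y) x = pd i f x - pd i g x := by
  rw [(hf.hasFDerivAt.fun_sub hg.hasFDerivAt).pd_eq i, hf.hasFDerivAt.pd_eq i,
    hg.hasFDerivAt.pd_eq i]
  rfl

theorem pd_mul (hf : DifferentiableAt ℝ f x) (hg : DifferentiableAt ℝ g x) :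
    pd i (fun y => f y * g y) x = pd i f x * g x + f x * pd i g x := by
  rw [(hf.hasFDerivAt.fun_mul hg.hasFDerivAt).pd_eq i, hf.hasFDerivAt.pd_eq i,
    hg.hasFDerivAt.pd_eq i]
  simp only [_root_.add_apply, _root_.smul_apply, smul_eq_mul]
  ring

theorem pd_neg (hf : DifferentiableAt ℝ f x) : pd i (fun y => -f y) x = -pd i f x := by
  rw [hf.hasFDerivAt.fun_neg.pd_eq i, hf.hasFDerivAt.pd_eq i]
  rfl

theorem pd_pow (hf : DifferentiableAt ℝ f x) (n : ℕ) :
    pd i (fun y => f y ^ n) x = n * f x ^ (n - 1) * pd i f x := by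
  rw [(hf.hasFDerivAt.pow n).pd_eq i, hf.hasFDerivAt.pd_eq i]
  simp only [nsmul_eq_mul, _root_.smul_apply, smul_eq_mul]

end PartialDerivative

theorem hasDerivAt_exp_mul_integral_exp_neg {P g q : ℝ → ℝ} {k c : ℝ}
    (hP : ∀ t, HasDerivAt P (g t) t)
    (hq : ∀ t, q t = exp (P t) * (k * (∫ τ in (0 : ℝ)..t, exp (-P τ)) + c)) (t : ℝ) :
    HasDerivAt q (g t * q t + k) t := by
  have hPc : Continuous P := continuous_iff_continuousAt.2 fun t => (hP t).continuousAt
  have hI : HasDerivAt (fun u => ∫ τ in (0 : ℝ)..u, exp (-P τ)) (exp (-P t)) t :=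
    ((continuous_exp.comp hPc.neg).integral_hasStrictDerivAt 0 t).hasDerivAt
  have hprod := (hP t).exp.fun_mul ((hI.const_mul k).add_const c)
  rw [← funext hq] at hprod
  refine hprod.congr_deriv ?_
  rw [hq t, mul_left_comm (exp (P t)) k, ← exp_add, add_neg_cancel, exp_zero]
  ring

/-- Theorem 3.1 of the paper. -/
theorem stmt_4 (ρ ν μ₀ η : ℝ) (hρ : 0 < ρ) (a b c s : ℝ)
    (h h' β β' : ℝ → ℝ)
    (hh : ∀ t, HasDerivAt h (h' t) t) (hβ : ∀ t, HasDerivAt β (β' t) t)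
    (P : ℝ → ℝ) (hP : ∀ t, HasDerivAt P (β t - a * h t) t)
    (q : ℝ → ℝ)
    (hq : ∀ t, q t = Real.exp (2 * P t) *
      ((2 * a - b) * s * (∫ τ in (0:ℝ)..t, Real.exp (-2 * P τ)) + c)) :
    MHD ρ ν μ₀ η
      (fun t x => ![a * s * x 1 * x 2 + (β t - a * h t) * x 0,
        -(β t) * x 1, a * h t * x 2])
      (fun t x => ![a * q t * x 1 * x 2 + (b / 2 - a) * x 0,
        -(b / 2) * x 1, a * x 2])
      (fun t x => -ρ * ((β' t - a * h' t + (β t - a * h t) ^ 2) * (x 0) ^ 2 / 2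
        + ((β t) ^ 2 - β' t) * (x 1) ^ 2 / 2
        + (a / 2) * (h' t + a * (h t) ^ 2) * (x 2) ^ 2
        - μ₀ * a ^ 2 * (q t) ^ 2 * (x 1) ^ 2 * (x 2) ^ 2 / 2
        - μ₀ * a * q t * (b / 2 - a) * x 0 * x 1 * x 2)) := by
  have hq' : ∀ t, HasDerivAt q (2 * (β t - a * h t) * q t + (2 * a - b) * s) t :=
    hasDerivAt_exp_mul_integral_exp_neg (c := c) (fun t => (hP t).const_mul 2)
      fun t => by simp only [hq t, neg_mul]
  -- read off by `fun_prop` when discharging the side conditions of the differentiation lemmas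
  have hhd : Differentiable ℝ h := fun t => (hh t).differentiableAt
  have hβd : Differentiable ℝ β := fun t => (hβ t).differentiableAt
  have hqd : Differentiable ℝ q := fun t => (hq' t).differentiableAt
  have hhe : deriv h = h' := funext fun t => (hh t).deriv
  have hβe : deriv β = β' := funext fun t => (hβ t).deriv
  have hqe : deriv q = _ := funext fun t => (hq' t).deriv
  intro t x
  refine ⟨?_, fun i => ?_, ?_, fun i => ?_⟩ <;> try fin_cases i
  all_goals
    simp (disch := fun_prop) only [vdiv, slap, vcurl, cross3, Fin.sum_univ_three, Fin.isValue,
      Fin.zero_eta, Fin.mk_one, Fin.reduceFinMk, cons_val_zero, cons_val_one, cons_val,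
      pd_add, pd_sub, pd_neg, pd_mul, pd_pow, pd_const, pd_apply, Fin.reduceEq, ↓reduceIte,
      deriv_fun_add, deriv_fun_sub, deriv_fun_mul, deriv.fun_neg', deriv_const', hhe, hβe, hqe,
      div_eq_mul_inv]
    field_simp
    ring
end

section
/- Let d > 1 and ε ∈ {1, −1}, let I ⊆ ℝ be an interval, and let α : I → ℝ be twice continuously differentiable with sin α(t) ≠ 0 and d sin²α(t) > 1 for all t ∈ I. Let β : I → ℝ be any function with β′(t) = ε α′(t) / ( sin²α(t) · √( d − 1/sin²α(t) ) ) for all t ∈ I (i.e. β = ±∫ dα/( sin²α √(d − sin⁻²α) ) + d₀). Then β is twice differentiable and for all t ∈ I: α″ β′ sin α − α′ β″ sin α − 2 (α′)² β′ cos α − (β′)³ sin²α cos α = 0. -/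
/-!
With `g(x) = 1 / (sin² x √(d - 1/sin² x))` the prescribed derivative is `β' = ε α' g(α)`, so
`β'' = ε (α'' g(α) + α'² g'(α))`. Substituting, the `α''` terms cancel and the relation reduces to
`α'³ (ε sin α g'(α) + 2 ε cos α g(α) + ε³ sin² α cos α g(α)³) = 0`. Since `ε³ = ε`, this is the
first-order equation `sin x g' = -cos x g (2 + sin² x g²)`, which a direct computation confirms.
-/

open Real

noncomputable def betaIntegrand (d x : ℝ) : ℝ :=
  (sin x ^ 2 * √(d - 1 / sin x ^ 2))⁻¹

lemma sin_ne_zero_of_one_lt_mul_sin_sq {d x : ℝ} (h : 1 < d * sin x ^ 2) : sin x ≠ 0 := by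
  rintro hs
  norm_num [hs] at h

lemma sub_one_div_sin_sq_pos {d x : ℝ} (h : 1 < d * sin x ^ 2) : 0 < d - 1 / sin x ^ 2 := by
  have hs2 : 0 < sin x ^ 2 := by
    have := sin_ne_zero_of_one_lt_mul_sin_sq h
    positivity
  rw [sub_pos, div_lt_iff₀ hs2]
  linarith

lemma hasDerivAt_betaIntegrand {d x : ℝ} (h : 1 < d * sin x ^ 2) :
    HasDerivAt (betaIntegrand d)
      (-(cos x * betaIntegrand d x * (2 + sin x ^ 2 * betaIntegrand d x ^ 2)) / sin x) x := by
  have hs := sin_ne_zero_of_one_lt_mul_sin_sq h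
  have hw := sub_one_div_sin_sq_pos h
  have hq : √(d - 1 / sin x ^ 2) ≠ 0 := (sqrt_pos.mpr hw).ne'
  have hsin_sq : HasDerivAt (fun y => sin y ^ 2) (2 * sin x * cos x) x := by
    simpa [mul_assoc] using (hasDerivAt_sin x).fun_pow 2
  have hradicand : HasDerivAt (fun y => d - 1 / sin y ^ 2) (2 * cos x / sin x ^ 3) x := by
    simp only [one_div]
    refine ((hsin_sq.fun_inv (pow_ne_zero 2 hs)).const_sub d).congr_deriv ?_
    field_simp
  have hden : HasDerivAt (fun y => sin y ^ 2 * √(d - 1 / sin y ^ 2))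
      (2 * sin x * cos x * √(d - 1 / sin x ^ 2)
        + sin x ^ 2 * (2 * cos x / sin x ^ 3 / (2 * √(d - 1 / sin x ^ 2)))) x :=
    hsin_sq.fun_mul (hradicand.sqrt hw.ne')
  refine (hden.fun_inv (mul_ne_zero (pow_ne_zero 2 hs) hq)).congr_deriv ?_
  unfold betaIntegrand
  generalize √(d - 1 / sin x ^ 2) = q at hq ⊢
  field_simp

theorem stmt_13_general (d : ℝ) (ε : ℝ) (hε : ε = 1 ∨ ε = -1)
    (I : Set ℝ)
    (α α' α'' : ℝ → ℝ)
    (hα : ∀ t ∈ I, HasDerivAt α (α' t) t)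
    (hα' : ∀ t ∈ I, HasDerivAt α' (α'' t) t)
    (hsin : ∀ t ∈ I, Real.sin (α t) ≠ 0)
    (hdsin : ∀ t ∈ I, 1 < d * Real.sin (α t) ^ 2) :
    ∃ β'' : ℝ → ℝ,
      (∀ t ∈ I, HasDerivAt
        (fun s => ε * α' s / (Real.sin (α s) ^ 2 * Real.sqrt (d - 1 / Real.sin (α s) ^ 2)))
        (β'' t) t) ∧
      ∀ t ∈ I,
        α'' t * (ε * α' t / (Real.sin (α t) ^ 2 * Real.sqrt (d - 1 / Real.sin (α t) ^ 2)))
            * Real.sin (α t)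
          - α' t * β'' t * Real.sin (α t)
          - 2 * (α' t) ^ 2
            * (ε * α' t / (Real.sin (α t) ^ 2 * Real.sqrt (d - 1 / Real.sin (α t) ^ 2)))
            * Real.cos (α t)
          - (ε * α' t / (Real.sin (α t) ^ 2 * Real.sqrt (d - 1 / Real.sin (α t) ^ 2))) ^ 3
            * Real.sin (α t) ^ 2 * Real.cos (α t) = 0 := by
  set g := betaIntegrand d
  set g' := fun x => -(cos x * g x * (2 + sin x ^ 2 * g x ^ 2)) / sin x
  have hβ' : (fun s => ε * α' s / (sin (α s) ^ 2 * √(d - 1 / sin (α s) ^ 2)))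
      = fun s => ε * (α' s * g (α s)) := by
    funext s
    rw [div_eq_mul_inv, mul_assoc]
    rfl
  have hε_cube : ε ^ 3 = ε := by rcases hε with rfl | rfl <;> norm_num
  refine ⟨fun t => ε * (α'' t * g (α t) + α' t * (g' (α t) * α' t)), fun t ht => ?_, fun t ht => ?_⟩
  · rw [hβ']
    exact ((hα' t ht).mul ((hasDerivAt_betaIntegrand (hdsin t ht)).comp t (hα t ht))).const_mul ε
  · rw [congrFun hβ' t]
    have hs := hsin t ht
    simp only [g']
    field_simp
    linear_combination -(α' t) ^ 3 * g (α t) ^ 3 * sin (α t) ^ 2 * cos (α t) * hε_cube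

/-- The compatibility relation (4.88)–(4.89): when `β' = ε α'/(sin²α √(d - sin⁻²α))`,
`β` is twice differentiable and
`α'' β' sin α - α' β'' sin α - 2 α'² β' cos α - β'³ sin²α cos α = 0`. -/
theorem stmt_13 (d : ℝ) (hd : 1 < d) (ε : ℝ) (hε : ε = 1 ∨ ε = -1)
    (I : Set ℝ)
    (α α' α'' β : ℝ → ℝ)
    (hα : ∀ t ∈ I, HasDerivAt α (α' t) t)
    (hα' : ∀ t ∈ I, HasDerivAt α' (α'' t) t)
    (hα''c : ContinuousOn α'' I)
    (hsin : ∀ t ∈ I, Real.sin (α t) ≠ 0)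
    (hdsin : ∀ t ∈ I, 1 < d * Real.sin (α t) ^ 2)
    (hβ : ∀ t ∈ I, HasDerivAt β
      (ε * α' t / (Real.sin (α t) ^ 2 * Real.sqrt (d - 1 / Real.sin (α t) ^ 2))) t) :
    ∃ β'' : ℝ → ℝ,
      (∀ t ∈ I, HasDerivAt
        (fun s => ε * α' s / (Real.sin (α s) ^ 2 * Real.sqrt (d - 1 / Real.sin (α s) ^ 2)))
        (β'' t) t) ∧
      ∀ t ∈ I,
        α'' t * (ε * α' t / (Real.sin (α t) ^ 2 * Real.sqrt (d - 1 / Real.sin (α t) ^ 2)))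
            * Real.sin (α t)
          - α' t * β'' t * Real.sin (α t)
          - 2 * (α' t) ^ 2
            * (ε * α' t / (Real.sin (α t) ^ 2 * Real.sqrt (d - 1 / Real.sin (α t) ^ 2)))
            * Real.cos (α t)
          - (ε * α' t / (Real.sin (α t) ^ 2 * Real.sqrt (d - 1 / Real.sin (α t) ^ 2))) ^ 3
            * Real.sin (α t) ^ 2 * Real.cos (α t) = 0 :=
  stmt_13_general d ε hε I α α' α'' hα hα' hsin hdsin
end
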